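/- arXiv:1611.06488 — 4 statements merged into one kernel-verified Lean document; each statement's English description precedes it below -/
import Mathlib

section
/- Define a sequence of functions u_k : ℝ × ℝ → ℝ recursively by u_0(x, t) = x and u_{k+1}(x, t) = ∫₀ᵗ [ (∂²u_k/∂x²)(x, τ) + ∑_{r=0}^{k} u_r(x/2, τ/2) · (∂u_{k−r}/∂x)(x, τ/2) + (1/2) u_k(x, τ) ] dτ. Then for every k ≥ 0 and all x, t ∈ ℝ, u_k(x, t) = x · t^k / k!; consequently ∑_{k=0}^{∞} u_k(x, t) = x·e^t. -/
/-!
Each iterate is linear in `x`, so the diffusion term `∂²u_k/∂x²` vanishes. The delay term is a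
Cauchy product of exponential-series coefficients at `τ/2`, which by the binomial theorem collapses
to `(x/2) τ^k/k!`; with the reaction term `(1/2) u_k` the integrand is `x τ^k/k!`, whose integral
is `x t^(k+1)/(k+1)!`. Summing the exponential series gives `x eᵗ`.
-/

open Finset Nat

theorem add_pow_div_factorial_eq_sum {K : Type*} [Field K] [CharZero K] (a b : K) (k : ℕ) :
    (a + b) ^ k / k ! = ∑ r ∈ range (k + 1), a ^ r / r ! * (b ^ (k - r) / (k - r)!) := by
  rw [add_pow, sum_div]
  refine sum_congr rfl fun r hr => ?_
  rw [Nat.cast_choose K (Nat.lt_succ_iff.mp (mem_range.mp hr))]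
  have hk : (k ! : K) ≠ 0 := Nat.cast_ne_zero.mpr (factorial_ne_zero k)
  field_simp

theorem iteratedDeriv_two_mul_const (c x : ℝ) : iteratedDeriv 2 (fun y => y * c) x = 0 := by
  have hderiv : deriv (fun y : ℝ => y * c) = fun _ => c := by
    funext y
    simp
  rw [iteratedDeriv_succ', iteratedDeriv_one, hderiv, deriv_const]

noncomputable def burgersSource (u : ℕ → ℝ → ℝ → ℝ) (k : ℕ) (x τ : ℝ) : ℝ :=
  iteratedDeriv 2 (fun y => u k y τ) x
    + ∑ r ∈ range (k + 1), u r (x / 2) (τ / 2) * deriv (fun y => u (k - r) y (τ / 2)) x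
    + (1 / 2) * u k x τ

theorem burgersSource_congr {u v : ℕ → ℝ → ℝ → ℝ} {k : ℕ} (h : ∀ j ≤ k, u j = v j) :
    burgersSource u k = burgersSource v k := by
  funext x τ
  have hsum : ∀ r ∈ range (k + 1), u r = v r ∧ u (k - r) = v (k - r) := fun r hr =>
    ⟨h r (Nat.lt_succ_iff.mp (mem_range.mp hr)), h (k - r) (Nat.sub_le k r)⟩
  simp only [burgersSource, h k le_rfl]
  congr 2
  exact sum_congr rfl fun r hr => by rw [(hsum r hr).1, (hsum r hr).2]

noncomputable def burgersTerm (k : ℕ) (x t : ℝ) : ℝ := x * t ^ k / k !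

theorem burgersTerm_eq_mul_const (k : ℕ) (t : ℝ) :
    (fun y => burgersTerm k y t) = fun y => y * (t ^ k / k !) := by
  funext y
  rw [burgersTerm, mul_div_assoc]

theorem burgersSource_burgersTerm (k : ℕ) (x τ : ℝ) :
    burgersSource burgersTerm k x τ = x * τ ^ k / k ! := by
  have hdelay : ∑ r ∈ range (k + 1),
      burgersTerm r (x / 2) (τ / 2) * deriv (fun y => burgersTerm (k - r) y (τ / 2)) x
      = x / 2 * (τ ^ k / k !) := by
    simp only [burgersTerm_eq_mul_const, deriv_mul_const_field', deriv_id'', one_mul]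
    rw [← add_halves τ, add_pow_div_factorial_eq_sum, mul_sum, add_halves]
    refine sum_congr rfl fun r _ => ?_
    rw [burgersTerm]
    ring
  rw [burgersSource, burgersTerm_eq_mul_const, iteratedDeriv_two_mul_const, hdelay, burgersTerm]
  ring

theorem integral_burgersSource_burgersTerm (k : ℕ) (x t : ℝ) :
    ∫ τ in (0 : ℝ)..t, burgersSource burgersTerm k x τ = burgersTerm (k + 1) x t := by
  simp only [burgersSource_burgersTerm, mul_div_right_comm x, intervalIntegral.integral_const_mul,
    integral_pow, burgersTerm, factorial_succ]
  push_cast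
  field_simp
  ring

theorem hasSum_burgersTerm (x t : ℝ) :
    HasSum (fun k => burgersTerm k x t) (x * Real.exp t) := by
  rw [Real.exp_eq_exp_ℝ]
  simpa only [burgersTerm, mul_div_assoc] using
    (NormedSpace.expSeries_div_hasSum_exp t).mul_left x

theorem hptm_iterates_ex1_classical
    (u : ℕ → ℝ → ℝ → ℝ)
    (h0 : ∀ x t : ℝ, u 0 x t = x)
    (hrec : ∀ (k : ℕ) (x t : ℝ),
      u (k + 1) x t =
        ∫ τ in (0:ℝ)..t,
          (iteratedDeriv 2 (fun y => u k y τ) x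
            + ∑ r ∈ Finset.range (k + 1),
                u r (x / 2) (τ / 2) * deriv (fun y => u (k - r) y (τ / 2)) x
            + (1 / 2) * u k x τ)) :
    (∀ (k : ℕ) (x t : ℝ), u k x t = x * t ^ k / (Nat.factorial k)) ∧
    (∀ x t : ℝ, HasSum (fun k : ℕ => u k x t) (x * Real.exp t)) := by
  have hu : ∀ k, u k = burgersTerm k := by
    intro k
    induction k using Nat.strong_induction_on with
    | _ k ih =>
      funext x t
      cases k with
      | zero => simp [h0, burgersTerm]
      | succ k =>
        rw [hrec, ← integral_burgersSource_burgersTerm,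
          ← burgersSource_congr fun j hj => ih j (Nat.lt_succ_of_le hj)]
        rfl
  exact ⟨fun k x t => by rw [hu]; rfl, fun x t => by simpa only [hu] using hasSum_burgersTerm x t⟩
end

section
/- Define a sequence of functions u_k : ℝ × ℝ → ℝ recursively by u_0(x, t) = x² and u_{k+1}(x, t) = ∫₀ᵗ [ ∑_{r=0}^{k} u_r(x, τ/2) · (∂²u_{k−r}/∂x²)(x, τ/2) − u_k(x, τ) ] dτ. Then for every k ≥ 0 and all x, t ∈ ℝ, u_k(x, t) = x² · t^k / k!; consequently ∑_{k=0}^{∞} u_k(x, t) = x²·e^t. -/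
/-!
Every iterate has the form `x² · c(t)`, and `∂ₓ²(x² c) = 2c` does not depend on `x`. Assuming
`u_r(x, t) = x² tʳ/r!` for `r ≤ k`, the delayed product sum at time `τ` is `2x²` times the Cauchy
product `∑ (τ/2)ʳ/r! · (τ/2)ᵏ⁻ʳ/(k-r)!`, which is `τᵏ/k!` by the binomial theorem. Subtracting
`u_k` leaves `x² τᵏ/k!`, whose integral is `x² tᵏ⁺¹/(k+1)!`. Summing over `k` gives `x² eᵗ`.
-/

open Finset Nat

theorem add_pow_div_factorial {K : Type*} [Field K] [CharZero K] (a b : K) (n : ℕ) :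
    (a + b) ^ n / n ! = ∑ r ∈ range (n + 1), a ^ r / r ! * (b ^ (n - r) / (n - r)!) := by
  rw [add_pow, sum_div]
  refine sum_congr rfl fun r hr => ?_
  have hn : (n ! : K) ≠ 0 := Nat.cast_ne_zero.2 (factorial_ne_zero n)
  rw [cast_choose K (Nat.le_of_lt_succ (mem_range.1 hr))]
  field_simp

theorem iteratedDeriv_two_sq_mul_const (c x : ℝ) :
    iteratedDeriv 2 (fun y : ℝ => y ^ 2 * c) x = 2 * c := by
  rw [iteratedDeriv_succ, iteratedDeriv_one]
  simp

theorem integral_pow_div_factorial (n : ℕ) (t : ℝ) :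
    ∫ τ in (0 : ℝ)..t, τ ^ n / n ! = t ^ (n + 1) / (n + 1)! := by
  rw [intervalIntegral.integral_div, integral_pow, Nat.factorial_succ]
  push_cast
  field_simp
  ring

theorem delay_integrand_eq {u : ℕ → ℝ → ℝ → ℝ} {k : ℕ}
    (hu : ∀ r ≤ k, ∀ x t, u r x t = x ^ 2 * t ^ r / r !) (x τ : ℝ) :
    ∑ r ∈ range (k + 1), u r x (τ / 2) * iteratedDeriv 2 (fun y => u (k - r) y (τ / 2)) x
      - u k x τ = x ^ 2 * τ ^ k / k ! := by
  have hterm : ∀ r ∈ range (k + 1),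
      u r x (τ / 2) * iteratedDeriv 2 (fun y => u (k - r) y (τ / 2)) x
        = 2 * x ^ 2 * ((τ / 2) ^ r / r ! * ((τ / 2) ^ (k - r) / (k - r)!)) := by
    intro r hr
    have hsecond : iteratedDeriv 2 (fun y => u (k - r) y (τ / 2)) x
        = 2 * ((τ / 2) ^ (k - r) / (k - r)!) := by
      simp_rw [hu (k - r) (Nat.sub_le k r), mul_div_assoc]
      exact iteratedDeriv_two_sq_mul_const _ x
    rw [hsecond, hu r (Nat.le_of_lt_succ (mem_range.1 hr))]
    ring
  rw [sum_congr rfl hterm, ← mul_sum, ← add_pow_div_factorial, add_halves, hu k le_rfl]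
  ring

theorem hptm_iterates_ex2_classical
    (u : ℕ → ℝ → ℝ → ℝ)
    (h0 : ∀ x t : ℝ, u 0 x t = x ^ 2)
    (hrec : ∀ (k : ℕ) (x t : ℝ),
      u (k + 1) x t =
        ∫ τ in (0:ℝ)..t,
          ((∑ r ∈ Finset.range (k + 1),
              u r x (τ / 2) * iteratedDeriv 2 (fun y => u (k - r) y (τ / 2)) x)
            - u k x τ)) :
    (∀ (k : ℕ) (x t : ℝ), u k x t = x ^ 2 * t ^ k / (Nat.factorial k)) ∧
    (∀ x t : ℝ, HasSum (fun k : ℕ => u k x t) (x ^ 2 * Real.exp t)) := by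
  have closed_form : ∀ k x t, u k x t = x ^ 2 * t ^ k / k ! := by
    intro k
    induction k using Nat.strong_induction_on with
    | _ k ih =>
      cases k with
      | zero => simp [h0]
      | succ k =>
        intro x t
        have hu : ∀ r ≤ k, ∀ x t, u r x t = x ^ 2 * t ^ r / r ! :=
          fun r hr => ih r (Nat.lt_succ_of_le hr)
        simp_rw [hrec, delay_integrand_eq hu, mul_div_assoc, intervalIntegral.integral_const_mul,
          integral_pow_div_factorial]
  refine ⟨closed_form, fun x t => ?_⟩
  have hexp := (NormedSpace.expSeries_div_hasSum_exp t).mul_left (x ^ 2)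
  rw [← Real.exp_eq_exp_ℝ] at hexp
  simpa only [closed_form, mul_div_assoc] using hexp
end

section
/- Define a sequence of functions u_k : ℝ × ℝ → ℝ recursively by u_0(x, t) = x² and u_{k+1}(x, t) = ∫₀ᵗ [ ∑_{r=0}^{k} (d²/dx²)[u_r(x/2, τ/2)] · (d/dx)[u_{k−r}(x/2, τ/2)] − (1/8)(∂u_k/∂x)(x, τ) − u_k(x, τ) ] dτ, where (d/dx) and (d²/dx²) act on the composed functions x ↦ u_r(x/2, τ/2). Then for every k ≥ 0 and all x, t ∈ ℝ, u_k(x, t) = x² · (−t)^k / k!; consequently ∑_{k=0}^{∞} u_k(x, t) = x²·e^{−t}. -/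
/-!
By strong induction every iterate is `x² a_k(t)` with `a_k(t) = (-t)^k / k!`. For iterates of this
shape the delayed nonlinear term equals `(x/4) ∑_r a_r(τ/2) a_{k-r}(τ/2) = (x/4) a_k(τ)` by the
binomial theorem, and this cancels the advection term `(1/8) ∂ₓ(x² a_k(τ))` exactly. The integrand
is thus `-x² a_k(τ)`, whose integral is `x² a_{k+1}(t)`, and the iterates sum to the exponential
series of `x² e^{-t}`.
-/

open Finset Nat

theorem sum_range_pow_div_factorial_mul {K : Type*} [Field K] [CharZero K] (a b : K) (k : ℕ) :
    ∑ r ∈ range (k + 1), a ^ r / r ! * (b ^ (k - r) / (k - r)!) = (a + b) ^ k / k ! := by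
  rw [add_pow, sum_div]
  refine sum_congr rfl fun r hr => ?_
  have : (k ! : K) ≠ 0 := cast_ne_zero.mpr (factorial_ne_zero k)
  rw [cast_choose K (Nat.lt_succ_iff.mp (mem_range.mp hr))]
  field_simp

noncomputable def sqMulExpNegTerm (k : ℕ) (x t : ℝ) : ℝ := x ^ 2 * (-t) ^ k / k !

theorem hasSum_sqMulExpNegTerm (x t : ℝ) :
    HasSum (fun k => sqMulExpNegTerm k x t) (x ^ 2 * Real.exp (-t)) := by
  simp_rw [sqMulExpNegTerm, mul_div_assoc, Real.exp_eq_exp_ℝ]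
  exact (NormedSpace.expSeries_div_hasSum_exp (-t)).mul_left (x ^ 2)

theorem sum_iteratedDeriv_mul_deriv_sqMulExpNegTerm_half (k : ℕ) (x τ : ℝ) :
    ∑ r ∈ range (k + 1), iteratedDeriv 2 (fun y => sqMulExpNegTerm r (y / 2) (τ / 2)) x
        * deriv (fun y => sqMulExpNegTerm (k - r) (y / 2) (τ / 2)) x
      = 1 / 8 * deriv (fun y => sqMulExpNegTerm k y τ) x := by
  calc _ = x / 4 * ∑ r ∈ range (k + 1),
          (-(τ / 2)) ^ r / r ! * ((-(τ / 2)) ^ (k - r) / (k - r)!) := by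
        rw [mul_sum]
        refine sum_congr rfl fun r _ => ?_
        simp only [sqMulExpNegTerm, div_pow, iteratedDeriv_div_const,
          iteratedDeriv_mul_const_field, iteratedDeriv_pow, descFactorial_succ, Nat.add_one_sub_one,
          tsub_zero, descFactorial_zero, mul_one, one_mul, cast_ofNat, tsub_self, pow_zero,
          deriv_div_const, deriv_mul_const_field', differentiableAt_fun_id, deriv_fun_pow, pow_one,
          deriv_id'']
        ring
    _ = x / 4 * ((-τ) ^ k / k !) := by
        rw [sum_range_pow_div_factorial_mul, ← neg_add, add_halves]
    _ = _ := by
        simp only [one_div, sqMulExpNegTerm, deriv_div_const, differentiableAt_fun_id,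
          DifferentiableAt.fun_pow, differentiableAt_const, deriv_fun_mul, deriv_fun_pow, cast_ofNat,
          Nat.add_one_sub_one, pow_one, deriv_id'', mul_one, deriv_const', mul_zero, add_zero]
        ring

theorem integral_neg_sqMulExpNegTerm (k : ℕ) (x t : ℝ) :
    ∫ τ in (0 : ℝ)..t, -sqMulExpNegTerm k x τ = sqMulExpNegTerm (k + 1) x t := by
  have hmonomial (τ : ℝ) : -sqMulExpNegTerm k x τ = -(x ^ 2 * (-1) ^ k / k !) * τ ^ k := by
    rw [sqMulExpNegTerm, neg_pow τ]
    ring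
  simp_rw [hmonomial, intervalIntegral.integral_const_mul, integral_pow, sqMulExpNegTerm, neg_pow t,
    factorial_succ]
  push_cast
  field_simp
  ring

theorem hptm_iterates_ex3_classical
    (u : ℕ → ℝ → ℝ → ℝ)
    (h0 : ∀ x t : ℝ, u 0 x t = x ^ 2)
    (hrec : ∀ (k : ℕ) (x t : ℝ),
      u (k + 1) x t =
        ∫ τ in (0:ℝ)..t,
          ((∑ r ∈ Finset.range (k + 1),
              iteratedDeriv 2 (fun y => u r (y / 2) (τ / 2)) x
                * deriv (fun y => u (k - r) (y / 2) (τ / 2)) x)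
            - (1 / 8) * deriv (fun y => u k y τ) x
            - u k x τ)) :
    (∀ (k : ℕ) (x t : ℝ), u k x t = x ^ 2 * (-t) ^ k / (Nat.factorial k)) ∧
    (∀ x t : ℝ, HasSum (fun k : ℕ => u k x t) (x ^ 2 * Real.exp (-t))) := by
  have closed_form (k : ℕ) : u k = sqMulExpNegTerm k := by
    induction k using Nat.strong_induction_on with
    | _ k ih =>
      funext x t
      cases k with
      | zero => simp [h0, sqMulExpNegTerm]
      | succ k =>
        have ih_le (r : ℕ) (hr : r ≤ k) : u r = sqMulExpNegTerm r := ih r (Nat.lt_succ_of_le hr)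
        rw [hrec, ← integral_neg_sqMulExpNegTerm]
        refine intervalIntegral.integral_congr fun τ _ => ?_
        rw [ih_le k le_rfl, sum_congr rfl fun r hr => by
          rw [ih_le r (Nat.lt_succ_iff.mp (mem_range.mp hr)), ih_le (k - r) (Nat.sub_le k r)],
          sum_iteratedDeriv_mul_deriv_sqMulExpNegTerm_half, sub_self, zero_sub]
  refine ⟨fun k x t => by rw [closed_form k, sqMulExpNegTerm], fun x t => ?_⟩
  simpa only [closed_form] using hasSum_sqMulExpNegTerm x t
end

section
/- Let 0 < α ≤ 1, let u_0(x, t) = x², and define u_1(x, t) = J^α_t [ u_0(x, ·/2) · (∂²u_0/∂x²)(x, ·/2) − u_0(x, ·) ](t) and u_2(x, t) = J^α_t [ u_0(x, ·/2)·(∂²u_1/∂x²)(x, ·/2) + u_1(x, ·/2)·(∂²u_0/∂x²)(x, ·/2) − u_1(x, ·) ](t), where J^α_t denotes the Riemann–Liouville integral in the time variable. Then for all x ∈ ℝ and t > 0, u_1(x, t) = x²·t^α/Γ(1 + α) and u_2(x, t) = x²·t^{2α}·(2^{2−α} − 1)/Γ(1 + 2α). -/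
/-!
Since `∂²ₓ x² = 2`, the integrand defining `u₁` is the constant `x²`, and the integrand defining
`u₂` is `x² τ^α (4 · 2^(-α) - 1) / Γ(1 + α)`. Both iterates then follow from the power rule
`J^α τ^β = Γ(β + 1) / Γ(α + β + 1) · t^(α + β)`, which is the Beta integral
`∫₀ᵗ τ^(b-1) (t - τ)^(a-1) dτ = t^(a+b-1) Γ(a) Γ(b) / Γ(a + b)`.
-/

/-- Riemann–Liouville fractional integral of order `α` (applied in the time variable). -/
noncomputable def rlInt (α : ℝ) (f : ℝ → ℝ) (t : ℝ) : ℝ :=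
  (1 / Real.Gamma α) * ∫ τ in (0:ℝ)..t, (t - τ) ^ (α - 1) * f τ

open Real Set

theorem intervalIntegral_rpow_mul_sub_rpow {a b t : ℝ} (ha : 0 < a) (hb : 0 < b) (ht : 0 < t) :
    ∫ τ in (0:ℝ)..t, τ ^ (b - 1) * (t - τ) ^ (a - 1)
      = t ^ (a + b - 1) * (Gamma a * Gamma b / Gamma (a + b)) := by
  have hGamma := Complex.Gamma_mul_Gamma_eq_betaIntegral (s := (b : ℂ)) (t := (a : ℂ))
    (by simpa using hb) (by simpa using ha)
  have hGamma_ne : Complex.Gamma ((b : ℂ) + a) ≠ 0 :=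
    Complex.Gamma_ne_zero_of_re_pos (by simp; positivity)
  have hcast : EqOn (fun τ : ℝ => ((τ ^ (b - 1) * (t - τ) ^ (a - 1) : ℝ) : ℂ))
      (fun τ : ℝ => (τ : ℂ) ^ ((b : ℂ) - 1) * ((t : ℂ) - τ) ^ ((a : ℂ) - 1)) (uIcc 0 t) := by
    intro τ hτ
    rw [uIcc_of_le ht.le] at hτ
    push_cast [Complex.ofReal_cpow hτ.1, Complex.ofReal_cpow (sub_nonneg.2 hτ.2)]
    rfl
  apply Complex.ofReal_injective
  rw [← intervalIntegral.integral_ofReal, intervalIntegral.integral_congr hcast,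
    Complex.betaIntegral_scaled _ _ ht,
    eq_div_of_mul_eq hGamma_ne ((mul_comm _ _).trans hGamma.symm)]
  push_cast [Complex.ofReal_cpow ht.le, ← Complex.Gamma_ofReal]
  ring_nf

section rlInt

variable {α : ℝ}

theorem rlInt_const_mul (c : ℝ) (f : ℝ → ℝ) (t : ℝ) :
    rlInt α (fun τ => c * f τ) t = c * rlInt α f t := by
  simp only [rlInt, mul_left_comm _ c, intervalIntegral.integral_const_mul]

theorem rlInt_congr {f g : ℝ → ℝ} {t : ℝ} (h : EqOn f g (uIoo 0 t)) :
    rlInt α f t = rlInt α g t := by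
  unfold rlInt
  rw [intervalIntegral.integral_congr_uIoo fun τ hτ => congrArg _ (h hτ)]

theorem rlInt_rpow (hα : 0 < α) {β : ℝ} (hβ : -1 < β) {t : ℝ} (ht : 0 < t) :
    rlInt α (fun τ => τ ^ β) t = Gamma (β + 1) / Gamma (α + β + 1) * t ^ (α + β) := by
  have hGamma : Gamma α ≠ 0 := (Gamma_pos_of_pos hα).ne'
  have hbeta := intervalIntegral_rpow_mul_sub_rpow hα (by linarith : 0 < β + 1) ht
  simp only [add_sub_cancel_right, ← add_assoc] at hbeta
  rw [rlInt, funext fun τ => mul_comm ((t - τ) ^ (α - 1)) (τ ^ β), hbeta]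
  field_simp

theorem rlInt_one (hα : 0 < α) {t : ℝ} (ht : 0 < t) :
    rlInt α (fun _ => 1) t = t ^ α / Gamma (1 + α) := by
  simpa [rpow_zero, add_comm α, div_eq_inv_mul] using rlInt_rpow hα (by norm_num : (-1 : ℝ) < 0) ht

end rlInt

theorem div_two_rpow_mul_four {τ : ℝ} (hτ : 0 ≤ τ) (α : ℝ) :
    (τ / 2) ^ α * 4 = 2 ^ ((2:ℝ) - α) * τ ^ α := by
  rw [div_rpow hτ zero_le_two, rpow_sub two_pos, rpow_two]
  ring

theorem hptm_iterates_ex2_fractional_general (α : ℝ) (hα₀ : 0 < α)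
    (u₀ u₁ u₂ : ℝ → ℝ → ℝ)
    (h₀ : ∀ x t : ℝ, u₀ x t = x ^ 2)
    (h₁ : ∀ x t : ℝ, u₁ x t =
      rlInt α (fun τ =>
        u₀ x (τ / 2) * iteratedDeriv 2 (fun y => u₀ y (τ / 2)) x - u₀ x τ) t)
    (h₂ : ∀ x t : ℝ, u₂ x t =
      rlInt α (fun τ =>
        u₀ x (τ / 2) * iteratedDeriv 2 (fun y => u₁ y (τ / 2)) x
          + u₁ x (τ / 2) * iteratedDeriv 2 (fun y => u₀ y (τ / 2)) x
          - u₁ x τ) t) :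
    ∀ x t : ℝ, 0 < t →
      u₁ x t = x ^ 2 * t ^ α / Real.Gamma (1 + α) ∧
      u₂ x t = x ^ 2 * t ^ (2 * α) * (2 ^ ((2:ℝ) - α) - 1) / Real.Gamma (1 + 2 * α) := by
  have hu₀'' : ∀ s x, iteratedDeriv 2 (fun y => u₀ y s) x = 2 := fun s x => by simp [h₀]
  have hu₁ : ∀ y s, 0 < s → u₁ y s = y ^ 2 * (s ^ α / Gamma (1 + α)) := fun y s hs => by
    calc u₁ y s = rlInt α (fun _ => y ^ 2 * 1) s := by
          simp_rw [h₁, hu₀'', h₀, mul_two, add_sub_cancel_right, mul_one]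
      _ = y ^ 2 * (s ^ α / Gamma (1 + α)) := by rw [rlInt_const_mul, rlInt_one hα₀ hs]
  have hu₁'' : ∀ s, 0 < s → ∀ x,
      iteratedDeriv 2 (fun y => u₁ y s) x = 2 * (s ^ α / Gamma (1 + α)) :=
    fun s hs x => by simp [hu₁ _ s hs]
  intro x t ht
  refine ⟨by rw [hu₁ x t ht]; ring, ?_⟩
  have hintegrand : EqOn
      (fun τ => u₀ x (τ / 2) * iteratedDeriv 2 (fun y => u₁ y (τ / 2)) x
        + u₁ x (τ / 2) * iteratedDeriv 2 (fun y => u₀ y (τ / 2)) x - u₁ x τ)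
      (fun τ => x ^ 2 * (2 ^ ((2:ℝ) - α) - 1) / Gamma (1 + α) * τ ^ α) (uIoo 0 t) := by
    intro τ hτ
    rw [uIoo_of_le ht.le] at hτ
    have hτ2 : 0 < τ / 2 := half_pos hτ.1
    dsimp only
    rw [hu₁'' _ hτ2, hu₀'', hu₁ _ _ hτ2, hu₁ _ _ hτ.1, h₀]
    linear_combination x ^ 2 / Gamma (1 + α) * div_two_rpow_mul_four hτ.1.le α
  rw [h₂, rlInt_congr hintegrand, rlInt_const_mul, rlInt_rpow hα₀ (by linarith) ht,
    show α + α + 1 = 1 + 2 * α by ring, ← two_mul, add_comm α 1]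
  have hGamma := (Gamma_pos_of_pos (by linarith : 0 < 1 + α)).ne'
  field_simp

theorem hptm_iterates_ex2_fractional (α : ℝ) (hα₀ : 0 < α) (hα₁ : α ≤ 1)
    (u₀ u₁ u₂ : ℝ → ℝ → ℝ)
    (h₀ : ∀ x t : ℝ, u₀ x t = x ^ 2)
    (h₁ : ∀ x t : ℝ, u₁ x t =
      rlInt α (fun τ =>
        u₀ x (τ / 2) * iteratedDeriv 2 (fun y => u₀ y (τ / 2)) x - u₀ x τ) t)
    (h₂ : ∀ x t : ℝ, u₂ x t =
      rlInt α (fun τ =>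
        u₀ x (τ / 2) * iteratedDeriv 2 (fun y => u₁ y (τ / 2)) x
          + u₁ x (τ / 2) * iteratedDeriv 2 (fun y => u₀ y (τ / 2)) x
          - u₁ x τ) t) :
    ∀ x t : ℝ, 0 < t →
      u₁ x t = x ^ 2 * t ^ α / Real.Gamma (1 + α) ∧
      u₂ x t = x ^ 2 * t ^ (2 * α) * (2 ^ ((2:ℝ) - α) - 1) / Real.Gamma (1 + 2 * α) :=
  hptm_iterates_ex2_fractional_general α hα₀ u₀ u₁ u₂ h₀ h₁ h₂
end
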